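/- Let e_q(t) = ∑_{n≥0} t^n/[n]_q! and F(t) = ∑_{n≥1} f_n t^n/[n]_q!. Then e_q[F]_q = ∑_{n≥0} γ_n t^n/[n]_q! if and only if γ_0 = 1 and γ_{n+1} = ∑_{k=0}^n binom[n,k]_q γ_{n-k} f_{k+1} for all n ≥ 0, where binom[n,k]_q is the Gaussian binomial coefficient. -/

import Mathlib

/-- The q-integer `[n]_q = 1 + q + ... + q^{n-1}`. -/
noncomputable def qInt {K : Type*} [CommRing K] (q : K) (n : ℕ) : K :=
  ∑ i ∈ Finset.range n, q ^ i

/-- The q-factorial `[n]_q!`. -/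
noncomputable def qFact {K : Type*} [CommRing K] (q : K) (n : ℕ) : K :=
  ∏ i ∈ Finset.range n, qInt q (i + 1)

/-- The Gaussian binomial coefficient `[n]!/([k]![n-k]!)`. -/
noncomputable def qBinom {K : Type*} [Field K] (q : K) (n k : ℕ) : K :=
  qFact q n / (qFact q k * qFact q (n - k))

/-- The q-derivative `D_q F(t) = (F(qt) - F(t))/((q-1)t)`. -/
noncomputable def qDeriv {K : Type*} [CommRing K] (q : K) (F : PowerSeries K) :
    PowerSeries K :=
  PowerSeries.mk fun n => qInt q (n + 1) * PowerSeries.coeff (n + 1) F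


/-!
Both sides of the equivalence say that `G = ∑ γₙ tⁿ/[n]_q!` solves `D_q G = G · D_q F` with
`G(0) = 1`: the recurrence is this equation read coefficientwise, the product of two
q-exponential series being a q-binomial convolution. The series `e_q[F]_q` solves it because
`D_q (F^{[k]}/[k]_q!) = F^{[k-1]}/[k-1]_q! · D_q F`, and truncating the sum at `k = n` does not
change the `n`-th coefficient since `tᵏ ∣ F^{[k]}`. Finally, as every `[n]_q` is nonzero, the
equation determines all coefficients of `G` from `G(0)`.
-/

open PowerSeries Finset

section CommRing

variable {K : Type*} [CommRing K] (q : K)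

lemma qFact_zero : qFact q 0 = 1 := by
  simp [qFact]

lemma qFact_succ (n : ℕ) : qFact q (n + 1) = qFact q n * qInt q (n + 1) :=
  prod_range_succ _ _

@[simp]
lemma coeff_qDeriv (G : PowerSeries K) (n : ℕ) :
    coeff n (qDeriv q G) = qInt q (n + 1) * coeff (n + 1) G := by
  simp [qDeriv]

lemma qDeriv_sub (G H : PowerSeries K) : qDeriv q (G - H) = qDeriv q G - qDeriv q H := by
  ext n; simp [mul_sub]

lemma qDeriv_one : qDeriv q 1 = 0 := by
  ext n; simp

lemma qDeriv_sum_C_mul {ι : Type*} (s : Finset ι) (c : ι → K) (G : ι → PowerSeries K) :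
    qDeriv q (∑ i ∈ s, C (c i) * G i) = ∑ i ∈ s, C (c i) * qDeriv q (G i) := by
  ext n; simp [map_sum, mul_sum, mul_left_comm]

end CommRing

section Field

variable {K : Type*} [Field K] {q : K}

lemma qFact_ne_zero (hq : ∀ m : ℕ, 1 ≤ m → qInt q m ≠ 0) (n : ℕ) : qFact q n ≠ 0 := by
  induction n with
  | zero => simp [qFact_zero]
  | succ n ih => rw [qFact_succ]; exact mul_ne_zero ih (hq (n + 1) (by omega))

lemma qFact_succ_inv_mul_qInt (hq : ∀ m : ℕ, 1 ≤ m → qInt q m ≠ 0) (n : ℕ) :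
    (qFact q (n + 1))⁻¹ * qInt q (n + 1) = (qFact q n)⁻¹ := by
  rw [qFact_succ, mul_inv, mul_assoc, inv_mul_cancel₀ (hq (n + 1) (by omega)), mul_one]

lemma qDeriv_mk_div_qFact (hq : ∀ m : ℕ, 1 ≤ m → qInt q m ≠ 0) (a : ℕ → K) :
    qDeriv q (mk fun n => a n / qFact q n) = mk fun n => a (n + 1) / qFact q n := by
  ext n
  rw [coeff_qDeriv, coeff_mk, coeff_mk, qFact_succ, ← div_div,
    mul_div_cancel₀ _ (hq (n + 1) (by omega))]

lemma coeff_mk_div_qFact_mul (hq : ∀ m : ℕ, 1 ≤ m → qInt q m ≠ 0) (a b : ℕ → K) (n : ℕ) :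
    coeff n ((mk fun i => a i / qFact q i) * mk fun j => b j / qFact q j) =
      (∑ k ∈ range (n + 1), qBinom q n k * a (n - k) * b k) / qFact q n := by
  rw [coeff_mul, ← Nat.sum_antidiagonal_swap, Nat.sum_antidiagonal_eq_sum_range_succ_mk, sum_div]
  refine sum_congr rfl fun k _ => ?_
  have := qFact_ne_zero hq k
  have := qFact_ne_zero hq (n - k)
  have := qFact_ne_zero hq n
  simp only [Prod.swap_prod_mk, coeff_mk, qBinom]
  field_simp

lemma X_pow_succ_dvd_of_X_pow_dvd_qDeriv (hq : ∀ m : ℕ, 1 ≤ m → qInt q m ≠ 0)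
    {G : PowerSeries K} {j : ℕ} (h0 : constantCoeff G = 0) (h : X ^ j ∣ qDeriv q G) :
    X ^ (j + 1) ∣ G := by
  rw [X_pow_dvd_iff] at h ⊢
  rintro (_ | i) hi
  · simpa using h0
  · have := h i (by omega)
    rw [coeff_qDeriv] at this
    exact (mul_eq_zero.mp this).resolve_left (hq (i + 1) (by omega))

lemma eq_of_qDeriv_eq_mul (hq : ∀ m : ℕ, 1 ≤ m → qInt q m ≠ 0) {G G' H : PowerSeries K}
    (h0 : constantCoeff G = constantCoeff G') (hG : qDeriv q G = G * H)
    (hG' : qDeriv q G' = G' * H) : G = G' := by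
  have hdvd : ∀ j, X ^ j ∣ G - G' := by
    intro j
    induction j with
    | zero => simp
    | succ j ih =>
      refine X_pow_succ_dvd_of_X_pow_dvd_qDeriv hq (by simp [h0]) ?_
      rw [qDeriv_sub, hG, hG', ← sub_mul]
      exact dvd_mul_of_dvd_left ih H
  refine sub_eq_zero.mp (ext fun n => ?_)
  simpa using X_pow_dvd_iff.mp (hdvd (n + 1)) n (by omega)

end Field

section GesselPowers

variable {K : Type*} [Field K] {q : K} {F : PowerSeries K} {Fk : ℕ → PowerSeries K}

/-- The partial sum `∑_{k ≤ N} F^{[k]} / [k]_q!` of `e_q[F]_q`. -/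
noncomputable def qExpCompTrunc (q : K) (Fk : ℕ → PowerSeries K) (N : ℕ) : PowerSeries K :=
  ∑ k ∈ range (N + 1), C (qFact q k)⁻¹ * Fk k

lemma coeff_qExpCompTrunc (N n : ℕ) :
    coeff n (qExpCompTrunc q Fk N) = ∑ k ∈ range (N + 1), (qFact q k)⁻¹ * coeff n (Fk k) := by
  simp [qExpCompTrunc, map_sum]

lemma X_pow_dvd_gesselPower (hq : ∀ m : ℕ, 1 ≤ m → qInt q m ≠ 0)
    (hFkc : ∀ k, 0 < k → constantCoeff (Fk k) = 0)
    (hFkrec : ∀ k, 0 < k → qDeriv q (Fk k) = C (qInt q k) * Fk (k - 1) * qDeriv q F)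
    (k : ℕ) : X ^ k ∣ Fk k := by
  induction k with
  | zero => simp
  | succ k ih =>
    refine X_pow_succ_dvd_of_X_pow_dvd_qDeriv hq (hFkc _ k.succ_pos) ?_
    rw [hFkrec (k + 1) k.succ_pos, Nat.add_sub_cancel, mul_assoc]
    exact (ih.mul_right _).mul_left _

lemma coeff_qExpCompTrunc_of_le (hq : ∀ m : ℕ, 1 ≤ m → qInt q m ≠ 0)
    (hFkc : ∀ k, 0 < k → constantCoeff (Fk k) = 0)
    (hFkrec : ∀ k, 0 < k → qDeriv q (Fk k) = C (qInt q k) * Fk (k - 1) * qDeriv q F)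
    {n N : ℕ} (hnN : n ≤ N) :
    coeff n (qExpCompTrunc q Fk N) = coeff n (qExpCompTrunc q Fk n) := by
  induction N, hnN using Nat.le_induction with
  | base => rfl
  | succ N _ ih =>
    have hvanish : coeff n (Fk (N + 1)) = 0 :=
      X_pow_dvd_iff.mp (X_pow_dvd_gesselPower hq hFkc hFkrec (N + 1)) n (by omega)
    rw [← ih, qExpCompTrunc, sum_range_succ, map_add, coeff_C_mul, hvanish, mul_zero, add_zero]
    rfl

lemma qDeriv_qExpCompTrunc_succ (hq : ∀ m : ℕ, 1 ≤ m → qInt q m ≠ 0) (hFk0 : Fk 0 = 1)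
    (hFkrec : ∀ k, 0 < k → qDeriv q (Fk k) = C (qInt q k) * Fk (k - 1) * qDeriv q F)
    (N : ℕ) : qDeriv q (qExpCompTrunc q Fk (N + 1)) = qExpCompTrunc q Fk N * qDeriv q F := by
  rw [qExpCompTrunc, qDeriv_sum_C_mul, sum_range_succ', hFk0, qDeriv_one, mul_zero, add_zero,
    qExpCompTrunc, sum_mul]
  refine sum_congr rfl fun k _ => ?_
  rw [hFkrec (k + 1) k.succ_pos, Nat.add_sub_cancel, ← mul_assoc, ← mul_assoc, ← map_mul,
    qFact_succ_inv_mul_qInt hq]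

lemma qDeriv_eq_mul_qDeriv_of_coeff_eq_sum (hq : ∀ m : ℕ, 1 ≤ m → qInt q m ≠ 0)
    (hFk0 : Fk 0 = 1) (hFkc : ∀ k, 0 < k → constantCoeff (Fk k) = 0)
    (hFkrec : ∀ k, 0 < k → qDeriv q (Fk k) = C (qInt q k) * Fk (k - 1) * qDeriv q F)
    {Cs : PowerSeries K}
    (hC : ∀ n, coeff n Cs = ∑ k ∈ range (n + 1), (qFact q k)⁻¹ * coeff n (Fk k)) :
    qDeriv q Cs = Cs * qDeriv q F := by
  have htrunc {n N : ℕ} (h : n ≤ N) : coeff n Cs = coeff n (qExpCompTrunc q Fk N) := by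
    rw [hC, ← coeff_qExpCompTrunc, coeff_qExpCompTrunc_of_le hq hFkc hFkrec h]
  ext n
  rw [coeff_qDeriv, htrunc le_rfl, ← coeff_qDeriv, qDeriv_qExpCompTrunc_succ hq hFk0 hFkrec,
    coeff_mul, coeff_mul]
  refine sum_congr rfl fun ij hij => ?_
  rw [← htrunc (HasAntidiagonal.antidiagonal.fst_le hij)]

end GesselPowers

theorem stmt11_general {K : Type*} [Field K] (q : K)
    (hq : ∀ m : ℕ, 1 ≤ m → qInt q m ≠ 0)
    (f : ℕ → K)
    (F : PowerSeries K) (hFdef : F = PowerSeries.mk fun n => f n / qFact q n)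
    (Fk : ℕ → PowerSeries K) (hFk0 : Fk 0 = 1)
    (hFkc : ∀ k, 0 < k → PowerSeries.constantCoeff (Fk k) = 0)
    (hFkrec : ∀ k, 0 < k → qDeriv q (Fk k) =
      PowerSeries.C (qInt q k) * Fk (k - 1) * qDeriv q F)
    (Cs : PowerSeries K)
    (hC : ∀ n, PowerSeries.coeff n Cs =
      ∑ k ∈ Finset.range (n + 1), (qFact q k)⁻¹ * PowerSeries.coeff n (Fk k))
    (γ : ℕ → K) :
    (∀ n, PowerSeries.coeff n Cs = γ n / qFact q n) ↔
      (γ 0 = 1 ∧ ∀ n, γ (n + 1) =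
        ∑ k ∈ Finset.range (n + 1), qBinom q n k * γ (n - k) * f (k + 1)) := by
  set E : PowerSeries K := mk fun n => γ n / qFact q n
  have hDF : qDeriv q F = mk fun n => f (n + 1) / qFact q n := hFdef ▸ qDeriv_mk_div_qFact hq f
  have hE0 : constantCoeff E = γ 0 := by simp [E, qFact_zero]
  have hErec : qDeriv q E = E * qDeriv q F ↔
      ∀ n, γ (n + 1) = ∑ k ∈ range (n + 1), qBinom q n k * γ (n - k) * f (k + 1) := by
    simp only [E, hDF, qDeriv_mk_div_qFact hq, PowerSeries.ext_iff, coeff_mk,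
      coeff_mk_div_qFact_mul hq, div_left_inj' (qFact_ne_zero hq _)]
  have hCs0 : constantCoeff Cs = 1 := by
    simpa [hFk0, qFact_zero] using hC 0
  have hCsD := qDeriv_eq_mul_qDeriv_of_coeff_eq_sum hq hFk0 hFkc hFkrec hC
  have hCsE : (∀ n, coeff n Cs = γ n / qFact q n) ↔ Cs = E := by simp [E, PowerSeries.ext_iff]
  rw [hCsE, ← hE0, ← hErec]
  constructor
  · rintro rfl
    exact ⟨hCs0, hCsD⟩
  · rintro ⟨hE1, hED⟩
    exact eq_of_qDeriv_eq_mul hq (hCs0.trans hE1.symm) hCsD hED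

/-- Proposition 5.4: with `F = ∑_{n≥1} fₙ tⁿ/[n]!` and `F^{[k]}` its Gessel q-powers,
and `Cs = e_q[F]_q = ∑_k F^{[k]}/[k]!` (coefficientwise),
`e_q[F]_q = ∑ γₙ tⁿ/[n]!` holds iff `γ₀ = 1` and
`γ_{n+1} = ∑_{k=0}^n [n,k]_q γ_{n-k} f_{k+1}`. -/
theorem stmt11 {K : Type*} [Field K] (q : K)
    (hq : ∀ m : ℕ, 1 ≤ m → qInt q m ≠ 0)
    (f : ℕ → K) (hf0 : f 0 = 0)
    (F : PowerSeries K) (hFdef : F = PowerSeries.mk fun n => f n / qFact q n)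
    (Fk : ℕ → PowerSeries K) (hFk0 : Fk 0 = 1)
    (hFkc : ∀ k, 0 < k → PowerSeries.constantCoeff (Fk k) = 0)
    (hFkrec : ∀ k, 0 < k → qDeriv q (Fk k) =
      PowerSeries.C (qInt q k) * Fk (k - 1) * qDeriv q F)
    (Cs : PowerSeries K)
    (hC : ∀ n, PowerSeries.coeff n Cs =
      ∑ k ∈ Finset.range (n + 1), (qFact q k)⁻¹ * PowerSeries.coeff n (Fk k))
    (γ : ℕ → K) :
    (∀ n, PowerSeries.coeff n Cs = γ n / qFact q n) ↔
      (γ 0 = 1 ∧ ∀ n, γ (n + 1) =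
        ∑ k ∈ Finset.range (n + 1), qBinom q n k * γ (n - k) * f (k + 1)) :=
  stmt11_general q hq f F hFdef Fk hFk0 hFkc hFkrec Cs hC γ
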